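/- arXiv:1704.08754 — 9 statements merged into one kernel-verified Lean document; each statement's English description precedes it below -/
import Mathlib

section
/- For every x ∈ (0,1) with x ≠ 1/2, the function T_X is differentiable at x and T_X'(x) = (b_X − (a_X + b_X)·L(x)) / (x·(1−x)·(ln(1/x − 1))²). -/
open Real Filter Set Topology

/-- QRE response of the second player. -/
noncomputable def qreY (aY bY Ty : ℝ) (x : ℝ) : ℝ :=
  (1 + Real.exp ((bY - (aY + bY) * x) / Ty))⁻¹

/-- QRE temperature curve for the first player. -/
noncomputable def qreTX (aX bX aY bY Ty : ℝ) (x : ℝ) : ℝ :=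
  (bX - (aX + bX) * qreY aY bY Ty x) / Real.log (1 / x - 1)

/-- The auxiliary function L(x) = y(x) + x(1-x) ln(1/x-1) y'(x). -/
noncomputable def qreL (aY bY Ty : ℝ) (x : ℝ) : ℝ :=
  qreY aY bY Ty x + x * (1 - x) * Real.log (1 / x - 1) * deriv (qreY aY bY Ty) x


theorem differentiable_qreY (aY bY Ty : ℝ) : Differentiable ℝ (qreY aY bY Ty) := by
  unfold qreY
  fun_prop (disch := intro; positivity)

theorem log_one_div_sub_one_ne_zero {x : ℝ} (hx0 : x ≠ 0) (hx1 : x ≠ 1) (hx2 : x ≠ 1 / 2) :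
    Real.log (1 / x - 1) ≠ 0 := by
  -- Junk values: `1 / 0 - 1 = -1` and `log (-1) = 0`.
  refine Real.log_ne_zero.mpr ⟨?_, ?_, ?_⟩ <;> intro h <;> field_simp at h
  · exact hx1 (by linarith)
  · exact hx2 (by linarith)
  · simp at h

theorem hasDerivAt_log_one_div_sub_one {x : ℝ} (hx0 : x ≠ 0) (hx1 : x ≠ 1) :
    HasDerivAt (fun t : ℝ => Real.log (1 / t - 1)) (-(x * (1 - x))⁻¹) x := by
  have harg : 1 / x - 1 ≠ 0 := by
    intro h; field_simp at h; exact hx1 (by linarith)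
  have hsub : HasDerivAt (fun t : ℝ => 1 / t - 1) (-(x ^ 2)⁻¹) x := by
    simpa only [one_div] using (hasDerivAt_inv hx0).sub_const 1
  convert hsub.log harg using 1
  have h1x : 1 - x ≠ 0 := sub_ne_zero.mpr (Ne.symm hx1)
  field_simp

theorem hasDerivAt_qreTX (aX bX aY bY Ty : ℝ) {x : ℝ} (hx0 : x ≠ 0) (hx1 : x ≠ 1)
    (hlog : Real.log (1 / x - 1) ≠ 0) :
    HasDerivAt (qreTX aX bX aY bY Ty)
      ((bX - (aX + bX) * qreL aY bY Ty x) / (x * (1 - x) * (Real.log (1 / x - 1)) ^ 2)) x := by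
  have hnum : HasDerivAt (fun t => bX - (aX + bX) * qreY aY bY Ty t)
      (-((aX + bX) * deriv (qreY aY bY Ty) x)) x :=
    (((differentiable_qreY aY bY Ty) x).hasDerivAt.const_mul (aX + bX)).const_sub bX
  refine (hnum.div (hasDerivAt_log_one_div_sub_one hx0 hx1) hlog).congr_deriv ?_
  have h1x : 1 - x ≠ 0 := sub_ne_zero.mpr (Ne.symm hx1)
  unfold qreL
  field_simp
  ring

theorem stmt_1_general (aX bX aY bY Ty : ℝ) :
    ∀ x ∈ Set.Ioo (0:ℝ) 1, x ≠ 1/2 →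
      DifferentiableAt ℝ (qreTX aX bX aY bY Ty) x ∧
      deriv (qreTX aX bX aY bY Ty) x =
        (bX - (aX + bX) * qreL aY bY Ty x) /
          (x * (1 - x) * (Real.log (1 / x - 1))^2) := by
  rintro x ⟨hx0, hx1⟩ hx2
  have hT := hasDerivAt_qreTX aX bX aY bY Ty hx0.ne' hx1.ne
    (log_one_div_sub_one_ne_zero hx0.ne' hx1.ne hx2)
  exact ⟨hT.differentiableAt, hT.deriv⟩

theorem stmt_1 (aX bX aY bY Ty : ℝ) (hTy : 0 < Ty) :
    ∀ x ∈ Set.Ioo (0:ℝ) 1, x ≠ 1/2 →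
      DifferentiableAt ℝ (qreTX aX bX aY bY Ty) x ∧
      deriv (qreTX aX bX aY bY Ty) x =
        (bX - (aX + bX) * qreL aY bY Ty x) /
          (x * (1 - x) * (Real.log (1 / x - 1))^2) :=
  stmt_1_general aX bX aY bY Ty
end

section
/- Assume a_X > b_X > 0 and T_y > T_I, where T_I = max{0, (b_Y − a_Y)/(2·ln(a_X/b_X))}. Then y(1/2) > b_X/(a_X + b_X); moreover T_X(x) tends to +∞ as x tends to 1/2 from the right, and T_X(x) tends to −∞ as x tends to 1/2 from the left. -/
open Real Filter Set Topology

theorem stmt_2 (aX bX aY bY Ty : ℝ) (hTy : 0 < Ty)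
    (hab : aX > bX) (hbX : bX > 0)
    (hTI : Ty > max 0 ((bY - aY) / (2 * Real.log (aX / bX)))) :
    qreY aY bY Ty (1/2) > bX / (aX + bX) ∧
    Filter.Tendsto (qreTX aX bX aY bY Ty) (𝓝[>] (1/2 : ℝ)) Filter.atTop ∧
    Filter.Tendsto (qreTX aX bX aY bY Ty) (𝓝[<] (1/2 : ℝ)) Filter.atBot := by
  have haXbX : (0:ℝ) < aX + bX := by linarith
  have hrat : (1:ℝ) < aX / bX := (one_lt_div hbX).2 hab
  have hLg : 0 < Real.log (aX / bX) := Real.log_pos hrat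
  have hkey : (bY - aY) / (2 * Ty) < Real.log (aX / bX) := by
    rw [div_lt_iff₀ (by positivity)]
    rcases le_or_gt (bY - aY) 0 with h | h
    · nlinarith
    · have h1 : (bY - aY) / (2 * Real.log (aX / bX)) < Ty :=
        lt_of_le_of_lt (le_max_right _ _) hTI
      rw [div_lt_iff₀ (by positivity)] at h1
      linarith
  set E := Real.exp ((bY - (aY + bY) * (1/2 : ℝ)) / Ty) with hEdef
  have hEpos : 0 < E := Real.exp_pos _
  have hE : E < aX / bX := by
    rw [← Real.exp_log (by positivity : (0:ℝ) < aX / bX)]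
    apply Real.exp_lt_exp.2
    have harg : (bY - (aY + bY) * (1/2 : ℝ)) / Ty = (bY - aY) / (2 * Ty) := by
      field_simp; ring
    rw [harg]; exact hkey
  have part1 : qreY aY bY Ty (1/2) > bX / (aX + bX) := by
    show bX / (aX + bX) < (1 + E)⁻¹
    rw [show bX / (aX + bX) = ((aX + bX) / bX)⁻¹ by rw [inv_div]]
    apply inv_strictAnti₀ (by positivity)
    have : (aX + bX) / bX = aX / bX + 1 := by field_simp
    linarith
  have hYcont : Continuous (qreY aY bY Ty) := by
    apply Continuous.inv₀
    · exact continuous_const.add ((((continuous_const.sub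
        (continuous_const.mul continuous_id)).div_const Ty)).rexp)
    · intro x
      positivity
  set N : ℝ → ℝ := fun x => bX - (aX + bX) * qreY aY bY Ty x with hNdef
  have hNcont : Continuous N := continuous_const.sub (continuous_const.mul hYcont)
  have hc : N (1/2) < 0 := by
    have h2 : bX < qreY aY bY Ty (1/2) * (aX + bX) := (div_lt_iff₀ haXbX).1 part1
    simp only [hNdef]
    nlinarith
  have hg0 : Filter.Tendsto (fun x : ℝ => Real.log (1/x - 1)) (𝓝 (1/2 : ℝ)) (𝓝 0) := by
    have hinner : ContinuousAt (fun x : ℝ => 1/x - 1) (1/2 : ℝ) :=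
      ((continuousAt_const.div continuousAt_id (by norm_num))).sub continuousAt_const
    have hlog : ContinuousAt (fun x : ℝ => Real.log (1/x - 1)) (1/2 : ℝ) :=
      ContinuousAt.log hinner (by norm_num)
    have h := hlog.tendsto
    have hval : Real.log ((fun x : ℝ => 1/x - 1) (1/2 : ℝ)) = 0 := by norm_num
    rw [show (1 / (1/2 : ℝ) - 1) = 1 by norm_num, Real.log_one] at h
    exact h
  have part2 : Filter.Tendsto (qreTX aX bX aY bY Ty) (𝓝[>] (1/2 : ℝ)) Filter.atTop := by
    have hgneg : ∀ᶠ x in 𝓝[>] (1/2 : ℝ), Real.log (1/x - 1) < 0 := by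
      filter_upwards [Ioo_mem_nhdsGT_of_mem (by norm_num : (1/2 : ℝ) ∈ Ico (1/2 : ℝ) 1)]
        with x hx
      obtain ⟨hx1, hx2⟩ := hx
      have hx0 : (0:ℝ) < x := by linarith
      apply Real.log_neg
      · have : (1:ℝ) < 1/x := (one_lt_div hx0).2 hx2
        linarith
      · have : 1/x < 2 := by rw [div_lt_iff₀ hx0]; linarith
        linarith
    have hneg : Filter.Tendsto (fun x : ℝ => -Real.log (1/x - 1)) (𝓝[>] (1/2 : ℝ))
        (𝓝[>] (0:ℝ)) := by
      rw [tendsto_nhdsWithin_iff]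
      refine ⟨by simpa using (hg0.mono_left nhdsWithin_le_nhds).neg, ?_⟩
      filter_upwards [hgneg] with x hx
      simpa using hx
    have hinvtop : Filter.Tendsto (fun x : ℝ => (-Real.log (1/x - 1))⁻¹)
        (𝓝[>] (1/2 : ℝ)) Filter.atTop := hneg.inv_tendsto_nhdsGT_zero
    have hinv : Filter.Tendsto (fun x : ℝ => (Real.log (1/x - 1))⁻¹)
        (𝓝[>] (1/2 : ℝ)) Filter.atBot := by
      have := tendsto_neg_atTop_atBot.comp hinvtop
      simpa [Function.comp_def, inv_neg] using this
    have hN : Filter.Tendsto N (𝓝[>] (1/2 : ℝ)) (𝓝 (N (1/2))) :=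
      (hNcont.tendsto _).mono_left nhdsWithin_le_nhds
    have := hN.neg_mul_atBot hc hinv
    simp only [qreTX, div_eq_mul_inv]
    exact this
  have part3 : Filter.Tendsto (qreTX aX bX aY bY Ty) (𝓝[<] (1/2 : ℝ)) Filter.atBot := by
    have hgpos : ∀ᶠ x in 𝓝[<] (1/2 : ℝ), 0 < Real.log (1/x - 1) := by
      filter_upwards [Ioo_mem_nhdsLT_of_mem (by norm_num : (1/2 : ℝ) ∈ Ioc (0:ℝ) (1/2))]
        with x hx
      obtain ⟨hx1, hx2⟩ := hx
      apply Real.log_pos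
      have : (2:ℝ) < 1/x := by rw [lt_div_iff₀ hx1]; linarith
      linarith
    have hgtend : Filter.Tendsto (fun x : ℝ => Real.log (1/x - 1)) (𝓝[<] (1/2 : ℝ))
        (𝓝[>] (0:ℝ)) :=
      tendsto_nhdsWithin_iff.2 ⟨hg0.mono_left nhdsWithin_le_nhds, hgpos⟩
    have hinv : Filter.Tendsto (fun x : ℝ => (Real.log (1/x - 1))⁻¹)
        (𝓝[<] (1/2 : ℝ)) Filter.atTop := hgtend.inv_tendsto_nhdsGT_zero
    have hN : Filter.Tendsto N (𝓝[<] (1/2 : ℝ)) (𝓝 (N (1/2))) :=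
      (hNcont.tendsto _).mono_left nhdsWithin_le_nhds
    have := hN.neg_mul_atTop hc hinv
    simp only [qreTX, div_eq_mul_inv]
    exact this
  exact ⟨part1, part2, part3⟩
end

section
/- Assume a_X > b_X > 0, b_Y > a_Y, and 0 < T_y < T_I, where T_I = (b_Y − a_Y)/(2·ln(a_X/b_X)). Then y(1/2) < b_X/(a_X + b_X); moreover T_X(x) tends to −∞ as x tends to 1/2 from the right, and T_X(x) tends to +∞ as x tends to 1/2 from the left. -/
open Real Filter Set Topology

/-!
The condition `T_y < T_I` says exactly that `exp ((b_Y - a_Y) / (2 T_y)) > a_X / b_X`, i.e. that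
`y(1/2) < b_X / (a_X + b_X)`. Hence the numerator `b_X - (a_X + b_X) y(x)` of `T_X` is continuous
and positive at `x = 1/2`, while the denominator `ln (1/x - 1)` vanishes there, being negative on
the right of `1/2` and positive on its left.
-/

theorem continuous_qreY (aY bY Ty : ℝ) : Continuous (qreY aY bY Ty) :=
  Continuous.inv₀ (by fun_prop) fun _ => by positivity

theorem qreY_half (aY bY Ty : ℝ) :
    qreY aY bY Ty (1 / 2) = (1 + exp ((bY - aY) / (2 * Ty)))⁻¹ := by
  unfold qreY
  congr 3
  field_simp
  ring

theorem inv_one_add_exp_lt_div {a b t : ℝ} (hb : 0 < b) (ha : 0 < a) (h : log (a / b) < t) :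
    (1 + exp t)⁻¹ < b / (a + b) := by
  have hexp : a / b < exp t := by
    rw [← exp_log (div_pos ha hb)]
    exact exp_lt_exp.mpr h
  rw [← inv_div, inv_lt_inv₀ (by positivity) (by positivity), add_div, div_self hb.ne']
  linarith

theorem qreY_half_lt {aX bX aY bY Ty : ℝ} (hTy : 0 < Ty) (hab : bX < aX) (hbX : 0 < bX)
    (hTI : Ty < (bY - aY) / (2 * log (aX / bX))) :
    qreY aY bY Ty (1 / 2) < bX / (aX + bX) := by
  have hlog : 0 < log (aX / bX) := log_pos ((one_lt_div hbX).mpr hab)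
  rw [qreY_half]
  refine inv_one_add_exp_lt_div hbX (hbX.trans hab) ?_
  rw [lt_div_iff₀ (by positivity)] at hTI ⊢
  linarith

theorem log_inv_sub_one_neg {x : ℝ} (h : 1 / 2 < x) (h1 : x < 1) : log (1 / x - 1) < 0 := by
  have hx : 0 < x := by linarith
  apply log_neg
  · rw [sub_pos, lt_div_iff₀ hx]; linarith
  · rw [sub_lt_iff_lt_add, div_lt_iff₀ hx]; linarith

theorem log_inv_sub_one_pos {x : ℝ} (h0 : 0 < x) (h : x < 1 / 2) : 0 < log (1 / x - 1) := by
  apply log_pos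
  rw [lt_sub_iff_add_lt, lt_div_iff₀ h0]
  linarith

theorem tendsto_log_inv_sub_one_half :
    Tendsto (fun x : ℝ => log (1 / x - 1)) (𝓝 (1 / 2)) (𝓝 0) := by
  have : ContinuousAt (fun x : ℝ => log (1 / x - 1)) (1 / 2) :=
    (continuousAt_log (by norm_num)).comp
      ((continuousAt_const.div continuousAt_id (by norm_num)).sub continuousAt_const)
  convert this.tendsto
  norm_num

theorem tendsto_log_inv_sub_one_nhdsGT_half :
    Tendsto (fun x : ℝ => log (1 / x - 1)) (𝓝[>] (1 / 2)) (𝓝[<] 0) := by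
  refine tendsto_nhdsWithin_iff.mpr
    ⟨tendsto_log_inv_sub_one_half.mono_left nhdsWithin_le_nhds, ?_⟩
  filter_upwards [Ioo_mem_nhdsGT (by norm_num : (1 / 2 : ℝ) < 1)] with x hx
  exact log_inv_sub_one_neg hx.1 hx.2

theorem tendsto_log_inv_sub_one_nhdsLT_half :
    Tendsto (fun x : ℝ => log (1 / x - 1)) (𝓝[<] (1 / 2)) (𝓝[>] 0) := by
  refine tendsto_nhdsWithin_iff.mpr
    ⟨tendsto_log_inv_sub_one_half.mono_left nhdsWithin_le_nhds, ?_⟩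
  filter_upwards [Ioo_mem_nhdsLT (by norm_num : (0 : ℝ) < 1 / 2)] with x hx
  exact log_inv_sub_one_pos hx.1 hx.2

theorem stmt_3_general (aX bX aY bY Ty : ℝ) (hTy : 0 < Ty)
    (hab : aX > bX) (hbX : bX > 0)
    (hTI : Ty < (bY - aY) / (2 * Real.log (aX / bX))) :
    qreY aY bY Ty (1/2) < bX / (aX + bX) ∧
    Filter.Tendsto (qreTX aX bX aY bY Ty) (𝓝[>] (1/2 : ℝ)) Filter.atBot ∧
    Filter.Tendsto (qreTX aX bX aY bY Ty) (𝓝[<] (1/2 : ℝ)) Filter.atTop := by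
  have hy := qreY_half_lt hTy hab hbX hTI
  set N := fun x => bX - (aX + bX) * qreY aY bY Ty x
  have hN : Tendsto N (𝓝 (1 / 2)) (𝓝 (N (1 / 2))) :=
    (continuous_const.sub ((continuous_qreY aY bY Ty).const_mul _)).tendsto _
  have hN_pos : 0 < N (1 / 2) := by
    have := (lt_div_iff₀' (by linarith : 0 < aX + bX)).mp hy
    simp only [N]; linarith
  refine ⟨hy, ?_, ?_⟩
  · exact (hN.mono_left nhdsWithin_le_nhds).pos_mul_atBot hN_pos
      tendsto_log_inv_sub_one_nhdsGT_half.inv_tendsto_nhdsLT_zero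
  · exact (hN.mono_left nhdsWithin_le_nhds).pos_mul_atTop hN_pos
      tendsto_log_inv_sub_one_nhdsLT_half.inv_tendsto_nhdsGT_zero

theorem stmt_3 (aX bX aY bY Ty : ℝ) (hTy : 0 < Ty)
    (hab : aX > bX) (hbX : bX > 0) (hba : bY > aY)
    (hTI : Ty < (bY - aY) / (2 * Real.log (aX / bX))) :
    qreY aY bY Ty (1/2) < bX / (aX + bX) ∧
    Filter.Tendsto (qreTX aX bX aY bY Ty) (𝓝[>] (1/2 : ℝ)) Filter.atBot ∧
    Filter.Tendsto (qreTX aX bX aY bY Ty) (𝓝[<] (1/2 : ℝ)) Filter.atTop :=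
  stmt_3_general aX bX aY bY Ty hTy hab hbX hTI
end

section
/- Assume a_X > b_X > 0 and a_Y + b_Y > 0. Let x₁ = min{1/2, (b_Y − T_y·ln(a_X/b_X))/(a_Y + b_Y)} and T_B = b_Y/ln(a_X/b_X). Then for every x ∈ (0, 1/2): if T_y > T_B then T_X(x) < 0; and if T_y < T_B then T_X(x) > 0 if and only if x < x₁. -/
open Real Filter Set Topology

theorem stmt_6 (aX bX aY bY Ty : ℝ) (hTy : 0 < Ty)
    (hab : aX > bX) (hbX : bX > 0) (hY : aY + bY > 0) :
    ∀ x ∈ Set.Ioo (0:ℝ) (1/2),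
      (Ty > bY / Real.log (aX / bX) → qreTX aX bX aY bY Ty x < 0) ∧
      (Ty < bY / Real.log (aX / bX) →
        (0 < qreTX aX bX aY bY Ty x ↔
          x < min (1/2 : ℝ) ((bY - Ty * Real.log (aX / bX)) / (aY + bY)))) := by
  intro x hx
  obtain ⟨hx0, hx2⟩ := hx
  have hL : 0 < Real.log (aX / bX) := Real.log_pos (by rw [lt_div_iff₀ hbX]; linarith)
  have hd : 0 < Real.log (1 / x - 1) := Real.log_pos (by
    have : 2 < 1 / x := by rw [lt_div_iff₀ hx0]; linarith
    linarith)
  set E := Real.exp ((bY - (aY + bY) * x) / Ty) with hE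
  have hEpos : 0 < E := Real.exp_pos _
  have h1E : 0 < 1 + E := by linarith
  have hlog : Real.log E = (bY - (aY + bY) * x) / Ty := Real.log_exp _
  have hnum : bX - (aX + bX) * qreY aY bY Ty x = (bX * E - aX) / (1 + E) := by
    rw [qreY, ← hE]; field_simp; ring
  have hTX : qreTX aX bX aY bY Ty x = ((bX * E - aX) / (1 + E)) / Real.log (1 / x - 1) := by
    rw [qreTX, hnum]
  have hkey : aX < bX * E ↔ x < (bY - Ty * Real.log (aX / bX)) / (aY + bY) := by
    rw [lt_div_iff₀ hY, mul_comm bX E, ← div_lt_iff₀ hbX,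
      ← Real.log_lt_log_iff (div_pos (by linarith : (0:ℝ) < aX) hbX) hEpos, hlog, lt_div_iff₀ hTy]
    constructor <;> intro h <;> nlinarith
  have hkey' : bX * E < aX ↔ (bY - Ty * Real.log (aX / bX)) / (aY + bY) < x := by
    rw [div_lt_iff₀ hY, mul_comm bX E, ← lt_div_iff₀ hbX,
      ← Real.log_lt_log_iff hEpos (div_pos (by linarith : (0:ℝ) < aX) hbX), hlog, div_lt_iff₀ hTy]
    constructor <;> intro h <;> nlinarith
  constructor
  · intro hT
    rw [gt_iff_lt, div_lt_iff₀ hL] at hT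
    have hxs : (bY - Ty * Real.log (aX / bX)) / (aY + bY) < x := by
      rw [div_lt_iff₀ hY]; nlinarith
    have : bX * E - aX < 0 := by have := hkey'.mpr hxs; linarith
    rw [hTX]
    exact div_neg_of_neg_of_pos (div_neg_of_neg_of_pos this h1E) hd
  · intro _
    rw [hTX, lt_min_iff]
    constructor
    · intro h
      refine ⟨hx2, ?_⟩
      rw [← hkey]
      by_contra hc
      push_neg at hc
      have h1 : (bX * E - aX) / (1 + E) ≤ 0 :=
        div_nonpos_of_nonpos_of_nonneg (by linarith) (by linarith)
      nlinarith [div_nonpos_of_nonpos_of_nonneg h1 hd.le]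
    · rintro ⟨-, h⟩
      have := hkey.mpr h
      exact div_pos (div_pos (by linarith) h1E) hd
end

section
/- Assume a_X > b_X > 0, a_Y + b_Y > 0, b_Y > a_Y, and 0 < T_y < T_I, where T_I = (b_Y − a_Y)/(2·ln(a_X/b_X)). Then T_X(x) > 0 for every x ∈ (0, 1/2), T_X(x) tends to 0 as x tends to 0 from the right, and for every T_x > 0 there exists x ∈ (0, 1/2) with T_X(x) = T_x. -/
open Real Filter Set Topology

theorem stmt_10 (aX bX aY bY Ty : ℝ) (hTy : 0 < Ty)
    (hab : aX > bX) (hbX : bX > 0) (hY : aY + bY > 0) (hba : bY > aY)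
    (hTI : Ty < (bY - aY) / (2 * Real.log (aX / bX))) :
    (∀ x ∈ Set.Ioo (0:ℝ) (1/2), 0 < qreTX aX bX aY bY Ty x) ∧
    Filter.Tendsto (qreTX aX bX aY bY Ty) (𝓝[>] (0 : ℝ)) (𝓝 0) ∧
    ∀ Tx : ℝ, 0 < Tx → ∃ x ∈ Set.Ioo (0:ℝ) (1/2), qreTX aX bX aY bY Ty x = Tx := by
  have habX : (0:ℝ) < aX + bX := by linarith
  have hratio1 : (1:ℝ) < aX / bX := (one_lt_div hbX).mpr hab
  have hlogpos : 0 < Real.log (aX / bX) := Real.log_pos hratio1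
  have hlog_lt : Real.log (aX / bX) < (bY - aY) / (2 * Ty) := by
    rw [lt_div_iff₀ (by positivity)]
    have h := (lt_div_iff₀ (by positivity)).mp hTI
    nlinarith [h]
  have hA : aX / bX < Real.exp ((bY - aY) / (2 * Ty)) := by
    calc aX / bX = Real.exp (Real.log (aX / bX)) := (Real.exp_log (by positivity)).symm
    _ < _ := Real.exp_lt_exp.mpr hlog_lt
  have hE : ∀ x : ℝ, x ≤ 1/2 → aX / bX < Real.exp ((bY - (aY + bY) * x) / Ty) := by
    intro x hx
    refine lt_of_lt_of_le hA (Real.exp_le_exp.mpr ?_)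
    rw [div_le_div_iff₀ (by positivity) hTy]
    nlinarith [mul_le_mul_of_nonneg_left hx hY.le]
  have hypos : ∀ x : ℝ, 0 < 1 + Real.exp ((bY - (aY + bY) * x) / Ty) := fun x => by positivity
  -- numerator positivity
  have hN : ∀ x : ℝ, x ≤ 1/2 → 0 < bX - (aX + bX) * qreY aY bY Ty x := by
    intro x hx
    have hE' := hE x hx
    have h1 : (aX + bX) / bX < 1 + Real.exp ((bY - (aY + bY) * x) / Ty) := by
      have heq : (aX + bX) / bX = aX / bX + 1 := by field_simp
      rw [heq]; linarith
    have h2 : (1 + Real.exp ((bY - (aY + bY) * x) / Ty))⁻¹ < ((aX + bX) / bX)⁻¹ :=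
      inv_strictAnti₀ (by positivity) h1
    have h3 : ((aX + bX) / bX)⁻¹ = bX / (aX + bX) := inv_div _ _
    have h4 : qreY aY bY Ty x < bX / (aX + bX) := by
      rw [qreY]; rw [h3] at h2; exact h2
    have h5 : (aX + bX) * qreY aY bY Ty x < (aX + bX) * (bX / (aX + bX)) :=
      mul_lt_mul_of_pos_left h4 habX
    have h6 : (aX + bX) * (bX / (aX + bX)) = bX := by field_simp
    linarith [h5, h6.symm ▸ h5]
  -- continuity of qreY
  have hYcont : Continuous (qreY aY bY Ty) := by
    unfold qreY
    exact (continuous_const.add (Real.continuous_exp.comp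
      ((continuous_const.sub (continuous_const.mul continuous_id)).div_const Ty))).inv₀
      (fun x => (hypos x).ne')
  have hNcont : Continuous (fun x => bX - (aX + bX) * qreY aY bY Ty x) :=
    continuous_const.sub (continuous_const.mul hYcont)
  -- part 1
  have part1 : ∀ x ∈ Set.Ioo (0:ℝ) (1/2), 0 < qreTX aX bX aY bY Ty x := by
    intro x hx
    obtain ⟨hx0, hx2⟩ := hx
    have hgt : (1:ℝ) < 1 / x - 1 := by
      have : (2:ℝ) < 1 / x := by
        rw [lt_div_iff₀ hx0]; linarith
      linarith
    have hD : 0 < Real.log (1 / x - 1) := Real.log_pos hgt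
    exact div_pos (hN x hx2.le) hD
  -- part 2
  have hDtop : Tendsto (fun x => Real.log (1 / x - 1)) (𝓝[>] (0:ℝ)) atTop := by
    apply Real.tendsto_log_atTop.comp
    have h1 : Tendsto (fun x : ℝ => 1 / x) (𝓝[>] (0:ℝ)) atTop := by
      simpa [one_div] using tendsto_inv_nhdsGT_zero
    simpa [sub_eq_add_neg] using tendsto_atTop_add_const_right _ (-1 : ℝ) h1
  have part2 : Tendsto (qreTX aX bX aY bY Ty) (𝓝[>] (0:ℝ)) (𝓝 0) := by
    unfold qreTX
    exact ((hNcont.tendsto 0).mono_left nhdsWithin_le_nhds).div_atTop hDtop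
  refine ⟨part1, part2, ?_⟩
  -- tendsto atTop at 1/2 from the left
  have hDto0 : Tendsto (fun x => Real.log (1 / x - 1)) (𝓝[<] (1/2:ℝ)) (𝓝[>] 0) := by
    rw [tendsto_nhdsWithin_iff]
    constructor
    · have hc : ContinuousAt (fun x => Real.log (1 / x - 1)) (1/2:ℝ) := by
        apply Real.continuousAt_log ?_ |>.comp
        · exact ((continuousAt_const.div continuousAt_id (by norm_num)).sub continuousAt_const)
        · norm_num
      have h0 : Real.log (1 / (1/2:ℝ) - 1) = 0 := by norm_num
      exact h0 ▸ hc.continuousWithinAt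
    · filter_upwards [Ioo_mem_nhdsLT_of_mem (by constructor <;> norm_num : (1/2:ℝ) ∈ Set.Ioc 0 (1/2))] with x hx
      obtain ⟨hx0, hx2⟩ := hx
      have : (1:ℝ) < 1 / x - 1 := by
        have : (2:ℝ) < 1 / x := by rw [lt_div_iff₀ hx0]; linarith
        linarith
      exact Real.log_pos this
  have hTtop : Tendsto (qreTX aX bX aY bY Ty) (𝓝[<] (1/2:ℝ)) atTop := by
    have hNt : Tendsto (fun x => bX - (aX + bX) * qreY aY bY Ty x) (𝓝[<] (1/2:ℝ))
        (𝓝 (bX - (aX + bX) * qreY aY bY Ty (1/2))) :=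
      (hNcont.tendsto _).mono_left nhdsWithin_le_nhds
    have hmul := hNt.pos_mul_atTop (hN (1/2) le_rfl) (tendsto_inv_nhdsGT_zero.comp hDto0)
    have heq : qreTX aX bX aY bY Ty =
        fun x => (bX - (aX + bX) * qreY aY bY Ty x) * (Real.log (1 / x - 1))⁻¹ := by
      funext x; rw [qreTX, div_eq_mul_inv]
    rw [heq]
    simpa [Function.comp] using hmul
  -- helper inequality
  have hgt1 : ∀ x ∈ Set.Ioo (0:ℝ) (1/2), (1:ℝ) < 1 / x - 1 := by
    intro x hx
    have h2 : (2:ℝ) < 1 / x := by rw [lt_div_iff₀ hx.1]; linarith [hx.2]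
    linarith
  intro Tx hTx
  have hev1 : ∀ᶠ x in 𝓝[>] (0:ℝ), qreTX aX bX aY bY Ty x < Tx :=
    part2.eventually (eventually_lt_nhds hTx)
  have hmem1 : Set.Ioo (0:ℝ) (1/2) ∈ 𝓝[>] (0:ℝ) :=
    Ioo_mem_nhdsGT_of_mem (by constructor <;> norm_num)
  obtain ⟨a, haT, ha0, ha2⟩ :=
    (hev1.and (Filter.eventually_of_mem hmem1 fun x hx => hx)).exists
  have hev2 : ∀ᶠ x in 𝓝[<] (1/2:ℝ), Tx < qreTX aX bX aY bY Ty x :=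
    hTtop.eventually (eventually_gt_atTop Tx)
  have hmem2 : Set.Ioo a (1/2:ℝ) ∈ 𝓝[<] (1/2:ℝ) :=
    Ioo_mem_nhdsLT_of_mem ⟨ha2, le_rfl⟩
  obtain ⟨b, hbT, hab', hb2⟩ :=
    (hev2.and (Filter.eventually_of_mem hmem2 fun x hx => hx)).exists
  have hsub : Set.Icc a b ⊆ Set.Ioo (0:ℝ) (1/2) := fun x hx =>
    ⟨lt_of_lt_of_le ha0 hx.1, lt_of_le_of_lt hx.2 hb2⟩
  have hcont : ContinuousOn (qreTX aX bX aY bY Ty) (Set.Icc a b) := by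
    unfold qreTX
    apply ContinuousOn.div hNcont.continuousOn
    · apply ContinuousOn.log
      · exact (continuousOn_const.div continuousOn_id
          fun x hx => (lt_of_lt_of_le ha0 hx.1).ne').sub continuousOn_const
      · intro x hx
        have := hgt1 x (hsub hx)
        linarith
    · intro x hx
      exact (Real.log_pos (hgt1 x (hsub hx))).ne'
  have hIcc := intermediate_value_Icc hab'.le hcont
  obtain ⟨x, hx, hxT⟩ := hIcc ⟨haT.le, hbT.le⟩
  exact ⟨x, hsub hx, hxT⟩
end

section
/- Assume a_X > b_X > 0, a_Y + b_Y > 0, and b_Y > a_Y. Let x₂ = max{1/2, (b_Y − T_y·ln(a_X/b_X))/(a_Y + b_Y)} and T_A = max{0, −a_Y/ln(a_X/b_X)}. Then for every x ∈ (1/2, 1): if T_y < T_A then T_X(x) < 0; and if T_y > T_A then T_X(x) > 0 if and only if x > x₂. -/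
open Real Filter Set Topology

lemma key_lt (aX bX aY bY Ty x : ℝ) (hTy : 0 < Ty) (hab : bX < aX) (hbX : 0 < bX)
    (hY : 0 < aY + bY) :
    (bX - (aX + bX) * qreY aY bY Ty x < 0 ↔
      (bY - Ty * Real.log (aX / bX)) / (aY + bY) < x) := by
  set u := (bY - (aY + bY) * x) / Ty with hu
  have he : (0:ℝ) < 1 + Real.exp u := by positivity
  have hq : 0 < aX / bX := div_pos (by linarith) hbX
  rw [qreY, ← hu, sub_neg, inv_eq_one_div, mul_one_div, lt_div_iff₀ he]
  have h1 : bX * (1 + Real.exp u) < aX + bX ↔ Real.exp u < aX / bX := by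
    rw [lt_div_iff₀ hbX]; constructor <;> intro h <;> nlinarith
  rw [h1, ← Real.lt_log_iff_exp_lt hq, hu, div_lt_iff₀ hTy, div_lt_iff₀ hY]
  constructor <;> intro h <;> nlinarith

lemma key_gt (aX bX aY bY Ty x : ℝ) (hTy : 0 < Ty) (hab : bX < aX) (hbX : 0 < bX)
    (hY : 0 < aY + bY) :
    (0 < bX - (aX + bX) * qreY aY bY Ty x ↔
      x < (bY - Ty * Real.log (aX / bX)) / (aY + bY)) := by
  set u := (bY - (aY + bY) * x) / Ty with hu
  have he : (0:ℝ) < 1 + Real.exp u := by positivity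
  have hq : 0 < aX / bX := div_pos (by linarith) hbX
  rw [qreY, ← hu, sub_pos, inv_eq_one_div, mul_one_div, div_lt_iff₀ he]
  have h1 : aX + bX < bX * (1 + Real.exp u) ↔ aX / bX < Real.exp u := by
    rw [div_lt_iff₀ hbX]; constructor <;> intro h <;> nlinarith
  rw [h1, ← Real.log_lt_iff_lt_exp hq, hu, lt_div_iff₀ hTy, lt_div_iff₀ hY]
  constructor <;> intro h <;> nlinarith

theorem stmt_11 (aX bX aY bY Ty : ℝ) (hTy : 0 < Ty)
    (hab : aX > bX) (hbX : bX > 0) (hY : aY + bY > 0) (hba : bY > aY) :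
    ∀ x ∈ Set.Ioo (1/2 : ℝ) 1,
      (Ty < max 0 (-aY / Real.log (aX / bX)) → qreTX aX bX aY bY Ty x < 0) ∧
      (Ty > max 0 (-aY / Real.log (aX / bX)) →
        (0 < qreTX aX bX aY bY Ty x ↔
          x > max (1/2 : ℝ) ((bY - Ty * Real.log (aX / bX)) / (aY + bY)))) := by
  intro x hx
  obtain ⟨hx1, hx2⟩ := hx
  have hx0 : (0:ℝ) < x := by linarith
  have hL : 0 < Real.log (aX / bX) :=
    Real.log_pos (by rw [lt_div_iff₀ hbX]; linarith)
  have hd : Real.log (1 / x - 1) < 0 := by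
    apply Real.log_neg
    · rw [sub_pos, lt_div_iff₀ hx0]; linarith
    · rw [sub_lt_iff_lt_add, div_lt_iff₀ hx0]; linarith
  constructor
  · intro hT
    have hT' : Ty < -aY / Real.log (aX / bX) := by
      rcases lt_max_iff.mp hT with h | h
      · linarith
      · exact h
    have hx0' : (1:ℝ) < (bY - Ty * Real.log (aX / bX)) / (aY + bY) := by
      rw [lt_div_iff₀ hY]
      have := (lt_div_iff₀ hL).mp hT'
      nlinarith
    have hN : 0 < bX - (aX + bX) * qreY aY bY Ty x :=
      (key_gt aX bX aY bY Ty x hTy hab hbX hY).mpr (by linarith)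
    exact div_neg_of_pos_of_neg hN hd
  · intro _
    rw [qreTX, gt_iff_lt, max_lt_iff]
    constructor
    · intro h
      have hN : bX - (aX + bX) * qreY aY bY Ty x < 0 := by
        by_contra hc
        push_neg at hc
        rcases lt_or_eq_of_le hc with h' | h'
        · nlinarith [div_neg_of_pos_of_neg h' hd]
        · rw [← h'] at h; simp at h
      exact ⟨hx1, (key_lt aX bX aY bY Ty x hTy hab hbX hY).mp hN⟩
    · rintro ⟨-, h⟩
      have hN : bX - (aX + bX) * qreY aY bY Ty x < 0 :=
        (key_lt aX bX aY bY Ty x hTy hab hbX hY).mpr h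
      exact div_pos_of_neg_of_neg hN hd
end

section
/- Assume a_X > b_X > 0, a_Y + b_Y < 0, and 0 < T_y < T_I, where T_I = max{0, (b_Y − a_Y)/(2·ln(a_X/b_X))}. Let x₃ = max{0, (b_Y − T_y·ln(a_X/b_X))/(a_Y + b_Y)}. Then: T_X(x) < 0 for every x ∈ (1/2, 1); T_X(x) > 0 for every x ∈ (x₃, 1/2); and T_X'(x) > 0 for every x ∈ (x₃, 1/2). -/
open Real Filter Set Topology

lemma qreY_hasDerivAt (aY bY Ty x : ℝ) (hTy : 0 < Ty) :
    HasDerivAt (qreY aY bY Ty)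
      (-(Real.exp ((bY - (aY + bY) * x) / Ty) * (-(aY + bY) / Ty)) /
        (1 + Real.exp ((bY - (aY + bY) * x) / Ty)) ^ 2) x := by
  have hg : HasDerivAt (fun x : ℝ => (bY - (aY + bY) * x) / Ty) (-(aY + bY) / Ty) x := by
    have h1 : HasDerivAt (fun x : ℝ => bY - (aY + bY) * x) (-(aY + bY)) x := by
      simpa using ((hasDerivAt_id x).const_mul (aY + bY)).const_sub bY
    exact h1.div_const Ty
  have hP : (1 + Real.exp ((bY - (aY + bY) * x) / Ty)) ≠ 0 := by positivity
  have := (hg.exp.const_add 1).inv hP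
  unfold qreY
  exact this

theorem stmt_14 (aX bX aY bY Ty : ℝ) (hTy : 0 < Ty)
    (hab : aX > bX) (hbX : bX > 0) (hY : aY + bY < 0)
    (hTI : Ty < max 0 ((bY - aY) / (2 * Real.log (aX / bX)))) :
    (∀ x ∈ Set.Ioo (1/2 : ℝ) 1, qreTX aX bX aY bY Ty x < 0) ∧
    (∀ x ∈ Set.Ioo (max 0 ((bY - Ty * Real.log (aX / bX)) / (aY + bY))) (1/2 : ℝ),
      0 < qreTX aX bX aY bY Ty x) ∧
    (∀ x ∈ Set.Ioo (max 0 ((bY - Ty * Real.log (aX / bX)) / (aY + bY))) (1/2 : ℝ),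
      0 < deriv (qreTX aX bX aY bY Ty) x) := by
  have hr : (1 : ℝ) < aX / bX := (one_lt_div hbX).mpr hab
  have hlr : 0 < Real.log (aX / bX) := Real.log_pos hr
  set lr := Real.log (aX / bX) with hlrdef
  have hq : Ty < (bY - aY) / (2 * lr) := by
    rcases max_cases 0 ((bY - aY) / (2 * lr)) with ⟨h1, h2⟩ | ⟨h1, h2⟩
    · rw [h1] at hTI; linarith
    · rwa [h1] at hTI
  have hTylr : Ty * lr < (bY - aY) / 2 := by
    have := (lt_div_iff₀ (by positivity : (0 : ℝ) < 2 * lr)).mp hq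
    nlinarith
  -- key: numerator positivity
  have key : ∀ x : ℝ, Ty * lr < bY - (aY + bY) * x →
      0 < bX - (aX + bX) * qreY aY bY Ty x := by
    intro x hx
    have hE : aX / bX < Real.exp ((bY - (aY + bY) * x) / Ty) := by
      have h1 : lr < (bY - (aY + bY) * x) / Ty := (lt_div_iff₀ hTy).mpr (by linarith)
      calc aX / bX = Real.exp lr := (Real.exp_log (by positivity)).symm
        _ < _ := Real.exp_lt_exp.mpr h1
    have hEpos : 0 < Real.exp ((bY - (aY + bY) * x) / Ty) := Real.exp_pos _
    have hP : (0 : ℝ) < 1 + Real.exp ((bY - (aY + bY) * x) / Ty) := by linarith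
    rw [qreY, sub_pos, ← div_eq_mul_inv, div_lt_iff₀ hP]
    have h2 : aX < Real.exp ((bY - (aY + bY) * x) / Ty) * bX := (div_lt_iff₀ hbX).mp hE
    nlinarith
  -- lower bound hypothesis unfolding for parts 2 and 3
  have lowkey : ∀ x : ℝ, max 0 ((bY - Ty * lr) / (aY + bY)) < x →
      Ty * lr < bY - (aY + bY) * x := by
    intro x hx
    have h1 : (bY - Ty * lr) / (aY + bY) < x :=
      lt_of_le_of_lt (le_max_right _ _) hx
    have h2 := (div_lt_iff_of_neg hY).mp h1
    nlinarith
  refine ⟨?_, ?_, ?_⟩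
  · -- part 1 : x ∈ (1/2, 1)
    rintro x ⟨hx1, hx2⟩
    have hx0 : 0 < x := by linarith
    have hnum : 0 < bX - (aX + bX) * qreY aY bY Ty x := by
      apply key
      have : (aY + bY) * x < (aY + bY) * (1 / 2) := by nlinarith
      linarith
    have hlt1 : 1 / x - 1 < 1 := by
      have : 1 / x < 2 := (div_lt_iff₀ hx0).mpr (by linarith)
      linarith
    have hgt0 : 0 < 1 / x - 1 := by
      have : 1 < 1 / x := (one_lt_div hx0).mpr hx2
      linarith
    have hD : Real.log (1 / x - 1) < 0 := Real.log_neg hgt0 hlt1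
    exact div_neg_of_pos_of_neg hnum hD
  · -- part 2
    rintro x ⟨hx1, hx2⟩
    have hx0 : 0 < x := lt_of_le_of_lt (le_max_left _ _) hx1
    have hnum := key x (lowkey x hx1)
    have hgt1 : 1 < 1 / x - 1 := by
      have : (2 : ℝ) < 1 / x := (lt_div_iff₀ hx0).mpr (by linarith)
      linarith
    exact div_pos hnum (Real.log_pos hgt1)
  · -- part 3
    rintro x ⟨hx1, hx2⟩
    have hx0 : 0 < x := lt_of_le_of_lt (le_max_left _ _) hx1
    have hnum := key x (lowkey x hx1)
    have hgt1 : 1 < 1 / x - 1 := by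
      have : (2 : ℝ) < 1 / x := (lt_div_iff₀ hx0).mpr (by linarith)
      linarith
    have hDpos : 0 < Real.log (1 / x - 1) := Real.log_pos hgt1
    -- derivatives
    have hy := qreY_hasDerivAt aY bY Ty x hTy
    set E := Real.exp ((bY - (aY + bY) * x) / Ty) with hE
    have hEpos : 0 < E := Real.exp_pos _
    set yD : ℝ := -(E * (-(aY + bY) / Ty)) / (1 + E) ^ 2 with hyD
    have hyDneg : yD < 0 := by
      apply div_neg_of_neg_of_pos
      · have h1 : 0 < -(aY + bY) / Ty := div_pos (by linarith) hTy
        have : 0 < E * (-(aY + bY) / Ty) := mul_pos hEpos h1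
        linarith
      · positivity
    have hN : HasDerivAt (fun t => bX - (aX + bX) * qreY aY bY Ty t)
        (-((aX + bX) * yD)) x := (hy.const_mul (aX + bX)).const_sub bX
    have hf : HasDerivAt (fun t : ℝ => 1 / t - 1) (-(x ^ 2)⁻¹) x := by
      simpa [one_div] using (hasDerivAt_inv hx0.ne').sub_const 1
    have hfne : 1 / x - 1 ≠ 0 := by linarith
    have hD : HasDerivAt (fun t : ℝ => Real.log (1 / t - 1))
        (-(x ^ 2)⁻¹ / (1 / x - 1)) x := hf.log hfne
    have hT : HasDerivAt (qreTX aX bX aY bY Ty)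
        ((-((aX + bX) * yD) * Real.log (1 / x - 1) -
          (bX - (aX + bX) * qreY aY bY Ty x) * (-(x ^ 2)⁻¹ / (1 / x - 1))) /
          Real.log (1 / x - 1) ^ 2) x := by
      have := hN.div hD (ne_of_gt hDpos)
      unfold qreTX
      exact this
    rw [hT.deriv]
    apply div_pos
    · have hA : 0 < -((aX + bX) * yD) := by
        have : (aX + bX) * yD < 0 := mul_neg_of_pos_of_neg (by linarith) hyDneg
        linarith
      have hD'neg : -(x ^ 2)⁻¹ / (1 / x - 1) < 0 :=
        div_neg_of_neg_of_pos (by positivity |> neg_neg_of_pos) (by linarith)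
      have hB : (bX - (aX + bX) * qreY aY bY Ty x) * (-(x ^ 2)⁻¹ / (1 / x - 1)) < 0 :=
        mul_neg_of_pos_of_neg hnum hD'neg
      nlinarith [mul_pos hA hDpos]
    · positivity
end

section
/- Assume b_X < 0 and a_X + b_X > 0. Then T_X(x) > 0 for every x ∈ (1/2, 1), T_X(x) < 0 for every x ∈ (0, 1/2), and T_X(x) tends to +∞ as x tends to 1/2 from the right. -/
open Real Filter Set Topology

lemma qreY_pos (aY bY Ty x : ℝ) : 0 < qreY aY bY Ty x := by
  unfold qreY; positivity

lemma qreN_neg (aX bX aY bY Ty x : ℝ) (hbX : bX < 0) (hsum : aX + bX > 0) :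
    bX - (aX + bX) * qreY aY bY Ty x < 0 := by
  have := qreY_pos aY bY Ty x
  nlinarith

lemma qreY_contAt (aY bY Ty : ℝ) (x : ℝ) : ContinuousAt (qreY aY bY Ty) x := by
  unfold qreY
  have h1 : ContinuousAt (fun x : ℝ => 1 + Real.exp ((bY - (aY + bY) * x) / Ty)) x := by
    fun_prop
  exact h1.inv₀ (by positivity)

theorem stmt_17 (aX bX aY bY Ty : ℝ) (hTy : 0 < Ty)
    (hbX : bX < 0) (hsum : aX + bX > 0) :
    (∀ x ∈ Set.Ioo (1/2 : ℝ) 1, 0 < qreTX aX bX aY bY Ty x) ∧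
    (∀ x ∈ Set.Ioo (0:ℝ) (1/2), qreTX aX bX aY bY Ty x < 0) ∧
    Filter.Tendsto (qreTX aX bX aY bY Ty) (𝓝[>] (1/2 : ℝ)) Filter.atTop := by
  have hN : ∀ x, bX - (aX + bX) * qreY aY bY Ty x < 0 :=
    fun x => qreN_neg aX bX aY bY Ty x hbX hsum
  refine ⟨?_, ?_, ?_⟩
  · rintro x ⟨hx1, hx2⟩
    have hx0 : 0 < x := by linarith
    have hlog : Real.log (1 / x - 1) < 0 := by
      apply Real.log_neg
      · have : 1 < 1 / x := by rw [lt_div_iff₀ hx0]; linarith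
        linarith
      · have : 1 / x < 2 := by rw [div_lt_iff₀ hx0]; linarith
        linarith
    exact div_pos_of_neg_of_neg (hN x) hlog
  · rintro x ⟨hx1, hx2⟩
    have hlog : 0 < Real.log (1 / x - 1) := by
      apply Real.log_pos
      have : 2 < 1 / x := by rw [lt_div_iff₀ hx1]; linarith
      linarith
    exact div_neg_of_neg_of_pos (hN x) hlog
  · -- Tendsto atTop
    set N : ℝ → ℝ := fun x => bX - (aX + bX) * qreY aY bY Ty x with hNdef
    have hNc : ContinuousAt N (1/2) := by
      exact (continuousAt_const.sub (continuousAt_const.mul (qreY_contAt aY bY Ty _)))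
    have hNneg : N (1/2) < 0 := hN _
    have hgc : ContinuousAt (fun x : ℝ => Real.log (1 / x - 1)) (1/2) := by
      have h1 : ContinuousAt (fun x : ℝ => 1 / x - 1) (1/2) := by
        fun_prop (disch := norm_num)
      exact h1.log (by norm_num)
    have hg0 : (fun x : ℝ => Real.log (1 / x - 1)) (1/2) = 0 := by
      norm_num
    have hmem : Set.Ioo (1/2 : ℝ) 1 ∈ 𝓝[>] (1/2 : ℝ) :=
      Ioo_mem_nhdsGT_of_mem ⟨le_refl _, by norm_num⟩
    have hgtend : Tendsto (fun x : ℝ => -Real.log (1 / x - 1)) (𝓝[>] (1/2 : ℝ)) (𝓝[>] 0) := by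
      apply tendsto_nhdsWithin_of_tendsto_nhds_of_eventually_within
      · have := hgc.tendsto
        norm_num at this
        simpa using (this.neg.mono_left nhdsWithin_le_nhds)
      · filter_upwards [hmem] with x hx
        rcases hx with ⟨hx1, hx2⟩
        have hx0 : 0 < x := by linarith
        have hlog : Real.log (1 / x - 1) < 0 := by
          apply Real.log_neg
          · have : 1 < 1 / x := by rw [lt_div_iff₀ hx0]; linarith
            linarith
          · have : 1 / x < 2 := by rw [div_lt_iff₀ hx0]; linarith
            linarith
        simpa using hlog
    have hinv : Tendsto (fun x : ℝ => (-Real.log (1 / x - 1))⁻¹) (𝓝[>] (1/2 : ℝ)) atTop :=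
      hgtend.inv_tendsto_nhdsGT_zero
    have hNtend : Tendsto (fun x => -N x) (𝓝[>] (1/2 : ℝ)) (𝓝 (-N (1/2))) :=
      (hNc.tendsto.neg).mono_left nhdsWithin_le_nhds
    have hmain : Tendsto (fun x => (-N x) * (-Real.log (1 / x - 1))⁻¹)
        (𝓝[>] (1/2 : ℝ)) atTop :=
      Filter.Tendsto.pos_mul_atTop (by linarith) hNtend hinv
    have heq : (qreTX aX bX aY bY Ty) = fun x => (-N x) * (-Real.log (1 / x - 1))⁻¹ := by
      funext x
      unfold qreTX
      rw [inv_neg]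
      ring
    rw [heq]
    exact hmain
end

section
/- Let n ≥ 2, let T > 0, and let x : ℝ → ℝⁿ be differentiable at time t with x_i(t) ∈ (0,1) for every i and Σ_i x_i(t) = 1, and suppose that at time t each coordinate satisfies the pure-exploration Q-learning equation ẋ_i(t) = T·x_i(t)·(−ln x_i(t) + Σ_j x_j(t)·ln x_j(t)). Then the derivative at t of the entropy H(t) = −Σ_i x_i(t)·ln x_i(t) equals T·(Σ_i x_i(t)·(ln x_i(t))² − (Σ_i x_i(t)·ln x_i(t))²), and if x(t) is not the uniform vector (1/n, …, 1/n) then this derivative is strictly positive. -/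
/-!
Along any curve in the open simplex, `d/dt (-∑ xᵢ log xᵢ) = -∑ ẋᵢ (log xᵢ + 1)`. Under the
exploration dynamics `ẋᵢ = T xᵢ (S - log xᵢ)` with `S = ∑ xⱼ log xⱼ`, this is `T` times the
variance of `log x` under the weights `x`. The variance vanishes only when `log x`, hence `x`,
is constant, i.e. only at the uniform point.
-/

open Real Filter Set Topology

section WeightedVariance

variable {ι : Type*} [Fintype ι]

theorem sum_mul_sub_weightedMean_mul_add (p a : ι → ℝ) (hp : ∑ i, p i = 1) (c : ℝ) :
    ∑ i, p i * (a i - ∑ j, p j * a j) * (a i + c) =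
      ∑ i, p i * a i ^ 2 - (∑ i, p i * a i) ^ 2 := by
  set m := ∑ j, p j * a j
  calc ∑ i, p i * (a i - m) * (a i + c)
      = ∑ i, p i * a i ^ 2 + (c - m) * ∑ i, p i * a i - c * m * ∑ i, p i := by
        simp only [Finset.mul_sum, ← Finset.sum_sub_distrib, ← Finset.sum_add_distrib]
        exact Finset.sum_congr rfl fun i _ => by ring
    _ = ∑ i, p i * a i ^ 2 - m ^ 2 := by rw [hp]; ring

theorem sum_mul_sub_weightedMean_sq (p a : ι → ℝ) (hp : ∑ i, p i = 1) :
    ∑ i, p i * (a i - ∑ j, p j * a j) ^ 2 =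
      ∑ i, p i * a i ^ 2 - (∑ i, p i * a i) ^ 2 := by
  rw [← sum_mul_sub_weightedMean_mul_add p a hp (-∑ j, p j * a j)]
  exact Finset.sum_congr rfl fun i _ => by ring

theorem sum_mul_sub_sq_pos {p a : ι → ℝ} (hp : ∀ i, 0 < p i) {i j : ι} (hij : a i ≠ a j)
    (c : ℝ) : 0 < ∑ k, p k * (a k - c) ^ 2 := by
  have hk : ∃ k, a k ≠ c := by
    by_contra! h
    exact hij ((h i).trans (h j).symm)
  obtain ⟨k, hk⟩ := hk
  exact Finset.sum_pos' (fun l _ => mul_nonneg (hp l).le (sq_nonneg _))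
    ⟨k, Finset.mem_univ k, mul_pos (hp k) (sq_pos_of_ne_zero (sub_ne_zero.mpr hk))⟩

end WeightedVariance

theorem exists_ne_of_ne_uniform {ι : Type*} [Fintype ι] {x : ι → ℝ} (hsum : ∑ i, x i = 1)
    (hx : x ≠ fun _ => (Fintype.card ι : ℝ)⁻¹) : ∃ i j, x i ≠ x j := by
  by_contra! hconst
  refine hx (funext fun i => (eq_inv_of_mul_eq_one_right ?_))
  rw [← hsum, Finset.sum_congr rfl fun j _ => hconst j i, Finset.sum_const, nsmul_eq_mul,
    Finset.card_univ]

theorem hasDerivAt_neg_sum_mul_log {ι : Type*} [Fintype ι] {x : ℝ → ι → ℝ} {t : ℝ}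
    (hdiff : ∀ i, DifferentiableAt ℝ (fun s => x s i) t) (hx : ∀ i, x t i ≠ 0) :
    HasDerivAt (fun s => -∑ i, x s i * log (x s i))
      (-∑ i, deriv (fun s => x s i) t * (log (x t i) + 1)) t := by
  refine (HasDerivAt.fun_sum fun i _ => ?_).neg
  rw [mul_comm]
  exact (hasDerivAt_mul_log (hx i)).comp t (hdiff i).hasDerivAt

theorem stmt_19_general (n : ℕ) (T : ℝ) (hT : 0 < T)
    (x : ℝ → Fin n → ℝ) (t : ℝ)
    (hdiff : ∀ i, DifferentiableAt ℝ (fun s => x s i) t)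
    (hmem : ∀ i, x t i ∈ Set.Ioo (0:ℝ) 1)
    (hsum : ∑ i, x t i = 1)
    (hode : ∀ i, deriv (fun s => x s i) t =
      T * x t i * (-Real.log (x t i) + ∑ j, x t j * Real.log (x t j))) :
    deriv (fun s => -∑ i, x s i * Real.log (x s i)) t =
      T * ((∑ i, x t i * (Real.log (x t i))^2) - (∑ i, x t i * Real.log (x t i))^2) ∧
    (x t ≠ (fun _ => (n : ℝ)⁻¹) →
      0 < deriv (fun s => -∑ i, x s i * Real.log (x s i)) t) := by
  have hpos : ∀ i, 0 < x t i := fun i => (hmem i).1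
  have hH := hasDerivAt_neg_sum_mul_log hdiff fun i => (hpos i).ne'
  have hderiv : deriv (fun s => -∑ i, x s i * log (x s i)) t =
      T * ∑ i, x t i * (log (x t i) - ∑ j, x t j * log (x t j)) * (log (x t i) + 1) := by
    rw [hH.deriv, Finset.mul_sum, ← Finset.sum_neg_distrib]
    exact Finset.sum_congr rfl fun i _ => by rw [hode]; ring
  rw [sum_mul_sub_weightedMean_mul_add _ _ hsum] at hderiv
  refine ⟨hderiv, fun hne => ?_⟩
  obtain ⟨i, j, hij⟩ := exists_ne_of_ne_uniform hsum (by simpa using hne)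
  rw [hderiv, ← sum_mul_sub_weightedMean_sq _ _ hsum]
  exact mul_pos hT (sum_mul_sub_sq_pos hpos ((log_injOn_pos.ne_iff (hpos i) (hpos j)).mpr hij) _)

theorem stmt_19 (n : ℕ) (hn : 2 ≤ n) (T : ℝ) (hT : 0 < T)
    (x : ℝ → Fin n → ℝ) (t : ℝ)
    (hdiff : ∀ i, DifferentiableAt ℝ (fun s => x s i) t)
    (hmem : ∀ i, x t i ∈ Set.Ioo (0:ℝ) 1)
    (hsum : ∑ i, x t i = 1)
    (hode : ∀ i, deriv (fun s => x s i) t =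
      T * x t i * (-Real.log (x t i) + ∑ j, x t j * Real.log (x t j))) :
    deriv (fun s => -∑ i, x s i * Real.log (x s i)) t =
      T * ((∑ i, x t i * (Real.log (x t i))^2) - (∑ i, x t i * Real.log (x t i))^2) ∧
    (x t ≠ (fun _ => (n : ℝ)⁻¹) →
      0 < deriv (fun s => -∑ i, x s i * Real.log (x s i)) t) :=
  stmt_19_general n T hT x t hdiff hmem hsum hode
end
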